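/- Under the assumptions above, for every w ∈ ℝ⁴: if α ≥ 1 then G(αw) ≥ α^{p+2} G(w), and if 0 < α ≤ 1 then G(αw) ≤ α^{p+2} G(w). -/

import Mathlib

/-!
Along the ray `t ↦ t • w`, condition (a) says `t φ'(t) ≥ (p + 2) φ(t)` for `φ t = G (t • w)`,
so `t ^ (-(p + 2)) * φ t` has nonnegative derivative on `(0, ∞)`. Comparing its values at `α`
and at `1` gives both inequalities.
-/

open RealInnerProductSpace Set

section Gradient

variable {E : Type*} [NormedAddCommGroup E] [InnerProductSpace ℝ E] [CompleteSpace E]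

theorem ContDiff.gradient {F : E → ℝ} {n : WithTop ℕ∞} (hF : ContDiff ℝ (n + 1) F) :
    ContDiff ℝ n (gradient F) :=
  (InnerProductSpace.toDual ℝ E).symm.contDiff.comp (hF.fderiv_right le_rfl)

theorem HasGradientAt.hasDerivAt_comp_smul {G : E → ℝ} {w g : E} {t : ℝ}
    (hG : HasGradientAt G g (t • w)) : HasDerivAt (fun s : ℝ => G (s • w)) ⟪w, g⟫ t := by
  have h := hG.hasFDerivAt.comp_hasDerivAt t ((hasDerivAt_id t).smul_const w)
  rw [one_smul, InnerProductSpace.toDual_apply_apply, real_inner_comm] at h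
  exact h

end Gradient

theorem monotoneOn_rpow_neg_mul_of_mul_le_mul_deriv {φ φ' : ℝ → ℝ} {q : ℝ}
    (hφ : ∀ t > 0, HasDerivAt φ (φ' t) t) (h : ∀ t > 0, q * φ t ≤ t * φ' t) :
    MonotoneOn (fun t => t ^ (-q) * φ t) (Ioi 0) := by
  have hderiv : ∀ t > 0, HasDerivAt (fun t => t ^ (-q) * φ t)
      (t ^ (-q - 1) * (t * φ' t - q * φ t)) t := by
    intro t ht
    refine ((Real.hasDerivAt_rpow_const (Or.inl ht.ne')).mul (hφ t ht)).congr_deriv ?_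
    rw [show t ^ (-q) = t ^ (-q - 1) * t by rw [← Real.rpow_add_one ht.ne']; ring_nf]
    ring
  refine monotoneOn_of_hasDerivWithinAt_nonneg (convex_Ioi 0)
    (fun t ht => (hderiv t ht).continuousAt.continuousWithinAt)
    (fun t ht => (hderiv t (interior_subset ht)).hasDerivWithinAt) ?_
  intro t ht
  rw [interior_Ioi] at ht
  exact mul_nonneg (Real.rpow_nonneg ht.le _) (sub_nonneg.2 (h t ht))

section Comparison

variable {φ : ℝ → ℝ} {q α : ℝ}

theorem MonotoneOn.rpow_mul_le_of_one_le (hmono : MonotoneOn (fun t => t ^ (-q) * φ t) (Ioi 0))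
    (hα : 1 ≤ α) : α ^ q * φ 1 ≤ φ α := by
  have hα0 : 0 < α := zero_lt_one.trans_le hα
  have h := hmono (mem_Ioi.2 one_pos) (mem_Ioi.2 hα0) hα
  simp only [Real.one_rpow, one_mul, Real.rpow_neg hα0.le] at h
  rwa [le_inv_mul_iff₀ (Real.rpow_pos_of_pos hα0 q)] at h

theorem MonotoneOn.le_rpow_mul_of_le_one (hmono : MonotoneOn (fun t => t ^ (-q) * φ t) (Ioi 0))
    (hα0 : 0 < α) (hα1 : α ≤ 1) : φ α ≤ α ^ q * φ 1 := by
  have h := hmono (mem_Ioi.2 hα0) (mem_Ioi.2 one_pos) hα1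
  simp only [Real.one_rpow, one_mul, Real.rpow_neg hα0.le] at h
  rwa [inv_mul_le_iff₀ (Real.rpow_pos_of_pos hα0 q)] at h

end Comparison

theorem stmt_1_general (p : ℝ)
    (F : EuclideanSpace ℝ (Fin 4) → ℝ)
    (hF : ContDiff ℝ 2 F)
    (G : EuclideanSpace ℝ (Fin 4) → ℝ)
    (hG : ∀ w, G w = ⟪w, gradient F w⟫)
    (ha : ∀ w, ⟪w, gradient G w⟫ ≥ (p + 2) * G w) :
    ∀ (w : EuclideanSpace ℝ (Fin 4)) (α : ℝ),
      (1 ≤ α → G (α • w) ≥ α ^ (p + 2) * G w) ∧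
      (0 < α → α ≤ 1 → G (α • w) ≤ α ^ (p + 2) * G w) := by
  have hGd : Differentiable ℝ G := by
    rw [funext hG]
    exact (contDiff_id.inner ℝ hF.gradient).differentiable one_ne_zero
  intro w α
  have hmono : MonotoneOn (fun t => t ^ (-(p + 2)) * G (t • w)) (Ioi 0) :=
    monotoneOn_rpow_neg_mul_of_mul_le_mul_deriv
      (fun t _ => (hGd (t • w)).hasGradientAt.hasDerivAt_comp_smul)
      (fun t _ => by simpa only [real_inner_smul_left] using ha (t • w))
  refine ⟨fun hα => ?_, fun hα0 hα1 => ?_⟩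
  · simpa only [one_smul] using hmono.rpow_mul_le_of_one_le hα
  · simpa only [one_smul] using hmono.le_rpow_mul_of_le_one hα0 hα1

/-- Lemma (Esfahani–Levandosky type), item (ii) for `G`: under condition (a),
`G(αw) ≥ α^(p+2) G(w)` for `α ≥ 1` and `G(αw) ≤ α^(p+2) G(w)` for `0 < α ≤ 1`. -/
theorem stmt_1 (p : ℝ) (hp : 0 < p)
    (F : EuclideanSpace ℝ (Fin 4) → ℝ)
    (hF : ContDiff ℝ 2 F) (hF0 : F 0 = 0)
    (G : EuclideanSpace ℝ (Fin 4) → ℝ)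
    (hG : ∀ w, G w = ⟪w, gradient F w⟫)
    (ha : ∀ w, ⟪w, gradient G w⟫ ≥ (p + 2) * G w) :
    ∀ (w : EuclideanSpace ℝ (Fin 4)) (α : ℝ),
      (1 ≤ α → G (α • w) ≥ α ^ (p + 2) * G w) ∧
      (0 < α → α ≤ 1 → G (α • w) ≤ α ^ (p + 2) * G w) :=
  stmt_1_general p F hF G hG ha
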